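/- Let α be the homoclinic orbit, λ > m > 0, and consider a' = b, b' = −(λ²−m²)a − (2p+1)α(t)^{2p}a. Let S(t) be the rotation flow of the unperturbed system (α ≡ 0), which preserves the norm |(x,y)|_λ = ((λ²−m²)x² + y²)^{1/2}. Then for every solution (a(t), b(t)) there exists (a⁺, b⁺) ∈ ℝ² such that |(a(t), b(t)) − S(t)(a⁺, b⁺)|_λ → 0 as t → +∞. -/

import Mathlib

/-!
For `t ≥ 0` the potential `g = (2p+1) α^{2p} = (2p+1) m² (p+1) / cosh² (p m t)` is nonnegative
and decreasing, so the energy `ω² a² + b² + g a²` is nonincreasing and `a` stays bounded.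
Pulled back along the free flow, `S(-t)(a, b)` has derivative `S(-t)(0, -g a)`, which is integrable
on `(0, ∞)` because `g` decays exponentially; hence `S(-t)(a, b)` converges to some `(a⁺, b⁺)`.
As `S(t)` is a linear isometry for `|·|_λ`, `|(a, b) - S(t)(a⁺, b⁺)|_λ = |S(-t)(a, b) - (a⁺, b⁺)|_λ`.
-/

open Real Filter

/-- The homoclinic orbit of the Klein-Gordon ODE. -/
noncomputable def alph (m : ℝ) (p : ℕ) (t : ℝ) : ℝ :=
  m ^ ((1 : ℝ) / p) * ((p : ℝ) + 1) ^ ((1 : ℝ) / (2 * p)) /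
    (Real.cosh (p * m * t)) ^ ((1 : ℝ) / p)

/-- The flow `S(t)` of the unperturbed elliptic system `x' = y`, `y' = -ω² x`,
where `ω = √(λ² - m²)`. -/
noncomputable def ellFlow (ω t : ℝ) (v : ℝ × ℝ) : ℝ × ℝ :=
  (v.1 * Real.cos (ω * t) + v.2 * Real.sin (ω * t) / ω,
    -v.1 * ω * Real.sin (ω * t) + v.2 * Real.cos (ω * t))

open MeasureTheory Set Topology

/-- The square of the norm `|(x, y)|_λ`, with `ω² = λ² - m²`. -/
def ellNormSq (ω : ℝ) (v : ℝ × ℝ) : ℝ := ω ^ 2 * v.1 ^ 2 + v.2 ^ 2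

section ellFlow

variable {ω : ℝ}

lemma ellFlow_sub (t : ℝ) (v w : ℝ × ℝ) :
    ellFlow ω t v - ellFlow ω t w = ellFlow ω t (v - w) := by
  ext <;> simp only [ellFlow, Prod.fst_sub, Prod.snd_sub] <;> ring

lemma ellFlow_ellFlow_neg (hω : ω ≠ 0) (t : ℝ) (v : ℝ × ℝ) :
    ellFlow ω t (ellFlow ω (-t) v) = v := by
  have pyth := sin_sq_add_cos_sq (ω * t)
  ext <;> simp only [ellFlow, mul_neg, sin_neg, cos_neg] <;> field_simp
  · linear_combination v.1 * ω * pyth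
  · linear_combination v.2 * pyth

lemma ellNormSq_ellFlow (hω : ω ≠ 0) (t : ℝ) (v : ℝ × ℝ) :
    ellNormSq ω (ellFlow ω t v) = ellNormSq ω v := by
  simp only [ellNormSq, ellFlow]
  field_simp
  linear_combination (ω ^ 2 * v.1 ^ 2 + v.2 ^ 2) * sin_sq_add_cos_sq (ω * t)

lemma ellNormSq_sub_ellFlow (hω : ω ≠ 0) (t : ℝ) (v w : ℝ × ℝ) :
    ellNormSq ω (v - ellFlow ω t w) = ellNormSq ω (ellFlow ω (-t) v - w) := by
  rw [← ellNormSq_ellFlow hω t (ellFlow ω (-t) v - w), ← ellFlow_sub, ellFlow_ellFlow_neg hω]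

lemma norm_ellFlow_zero_le (hω : 0 < ω) (t y : ℝ) :
    ‖ellFlow ω t (0, y)‖ ≤ max ω⁻¹ 1 * |y| := by
  simp only [ellFlow, Prod.norm_def, norm_eq_abs, max_mul_of_nonneg _ _ (abs_nonneg y), zero_mul,
    neg_zero, zero_add, abs_mul, abs_div, abs_of_pos hω]
  refine max_le_max ?_ ?_
  · calc |y| * |sin (ω * t)| / ω ≤ |y| * 1 / ω := by gcongr; exact abs_sin_le_one _
      _ = ω⁻¹ * |y| := by ring
  · calc |y| * |cos (ω * t)| ≤ |y| * 1 := by gcongr; exact abs_cos_le_one _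
      _ = 1 * |y| := by ring

lemma hasDerivAt_ellFlow_neg (hω : ω ≠ 0) {a b : ℝ → ℝ} {f t : ℝ}
    (ha : HasDerivAt a (b t) t) (hb : HasDerivAt b (-ω ^ 2 * a t + f) t) :
    HasDerivAt (fun s => ellFlow ω (-s) (a s, b s)) (ellFlow ω (-t) (0, f)) t := by
  have hωt : HasDerivAt (fun s => ω * -s) (-ω) t := by
    simpa using ((hasDerivAt_id t).neg).const_mul ω
  refine ((ha.mul hωt.cos).add ((hb.mul hωt.sin).div_const ω)).prodMk
    ((((ha.neg).mul_const ω).mul hωt.sin).add (hb.mul hωt.cos)) |>.congr_deriv ?_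
  ext <;> simp only [ellFlow, Pi.neg_apply] <;> field_simp <;> ring

end ellFlow

section Potential

variable {ω : ℝ} {g a b : ℝ → ℝ}

lemma antitoneOn_energy (hg : Differentiable ℝ g) (hg_anti : AntitoneOn g (Ici 0))
    (ha : ∀ t, HasDerivAt a (b t) t) (hb : ∀ t, HasDerivAt b (-ω ^ 2 * a t - g t * a t) t) :
    AntitoneOn (fun t => ω ^ 2 * a t ^ 2 + b t ^ 2 + g t * a t ^ 2) (Ici 0) := by
  have hE : ∀ t, HasDerivAt (fun t => ω ^ 2 * a t ^ 2 + b t ^ 2 + g t * a t ^ 2)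
      (deriv g t * a t ^ 2) t := fun t =>
    (((((ha t).fun_pow 2).const_mul _).fun_add ((hb t).fun_pow 2)).fun_add
      ((hg t).hasDerivAt.fun_mul ((ha t).fun_pow 2))).congr_deriv (by push_cast; ring)
  refine antitoneOn_of_deriv_nonpos (convex_Ici 0)
    (fun t _ => (hE t).continuousAt.continuousWithinAt)
    (fun t _ => (hE t).differentiableAt.differentiableWithinAt) fun t ht => ?_
  rw [interior_Ici] at ht
  rw [(hE t).deriv, ← derivWithin_of_mem_nhds (Ici_mem_nhds ht)]
  exact mul_nonpos_of_nonpos_of_nonneg hg_anti.derivWithin_nonpos (sq_nonneg _)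

lemma exists_abs_le_of_antitoneOn_potential (hω : 0 < ω) (hg : Differentiable ℝ g)
    (hg_anti : AntitoneOn g (Ici 0)) (hg_nonneg : ∀ t ∈ Ici 0, 0 ≤ g t)
    (ha : ∀ t, HasDerivAt a (b t) t) (hb : ∀ t, HasDerivAt b (-ω ^ 2 * a t - g t * a t) t) :
    ∃ A, ∀ t ∈ Ici (0 : ℝ), |a t| ≤ A := by
  refine ⟨√(ω ^ 2 * a 0 ^ 2 + b 0 ^ 2 + g 0 * a 0 ^ 2) / ω, fun t ht => ?_⟩
  have hE := antitoneOn_energy hg hg_anti ha hb self_mem_Ici ht ht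
  have := mul_nonneg (hg_nonneg t ht) (sq_nonneg (a t))
  rw [le_div_iff₀ hω]
  refine le_sqrt_of_sq_le ?_
  nlinarith [sq_abs (a t), sq_nonneg (b t)]

lemma integrableOn_ellFlow_neg_forcing (hω : 0 < ω) (hg : Differentiable ℝ g)
    (hg_anti : AntitoneOn g (Ici 0)) (hg_nonneg : ∀ t ∈ Ici 0, 0 ≤ g t)
    (hg_int : IntegrableOn g (Ioi 0))
    (ha : ∀ t, HasDerivAt a (b t) t) (hb : ∀ t, HasDerivAt b (-ω ^ 2 * a t - g t * a t) t) :
    IntegrableOn (fun s => ellFlow ω (-s) (0, -(g s * a s))) (Ioi 0) := by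
  obtain ⟨A, hA⟩ := exists_abs_le_of_antitoneOn_potential hω hg hg_anti hg_nonneg ha hb
  have ha_cont : Continuous a := continuous_iff_continuousAt.2 fun t => (ha t).continuousAt
  have hg_cont := hg.continuous
  have hcont : Continuous fun s => ellFlow ω (-s) (0, -(g s * a s)) := by
    unfold ellFlow; fun_prop
  refine (hg_int.const_mul (max ω⁻¹ 1 * A)).mono' hcont.aestronglyMeasurable
    ((ae_restrict_iff' measurableSet_Ioi).2 (ae_of_all _ fun s hs => ?_))
  have hs : s ∈ Ici 0 := mem_Ici.2 (le_of_lt hs)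
  calc ‖ellFlow ω (-s) (0, -(g s * a s))‖ ≤ max ω⁻¹ 1 * |-(g s * a s)| :=
        norm_ellFlow_zero_le hω _ _
    _ = max ω⁻¹ 1 * (g s * |a s|) := by rw [abs_neg, abs_mul, abs_of_nonneg (hg_nonneg s hs)]
    _ ≤ max ω⁻¹ 1 * (g s * A) := by gcongr; exacts [hg_nonneg s hs, hA s hs]
    _ = max ω⁻¹ 1 * A * g s := by ring

theorem exists_tendsto_ellNormSq_sub_ellFlow (hω : 0 < ω) (hg : Differentiable ℝ g)
    (hg_anti : AntitoneOn g (Ici 0)) (hg_nonneg : ∀ t ∈ Ici 0, 0 ≤ g t)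
    (hg_int : IntegrableOn g (Ioi 0))
    (ha : ∀ t, HasDerivAt a (b t) t) (hb : ∀ t, HasDerivAt b (-ω ^ 2 * a t - g t * a t) t) :
    ∃ v : ℝ × ℝ, Tendsto (fun t => ellNormSq ω ((a t, b t) - ellFlow ω t v)) atTop (𝓝 0) := by
  have hduhamel : ∀ t, HasDerivAt (fun s => ellFlow ω (-s) (a s, b s))
      (ellFlow ω (-t) (0, -(g t * a t))) t := fun t =>
    hasDerivAt_ellFlow_neg hω.ne' (ha t) ((hb t).congr_deriv (by ring))
  have hlim := tendsto_limUnder_of_hasDerivAt_of_integrableOn_Ioi (fun t _ => hduhamel t)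
    (integrableOn_ellFlow_neg_forcing hω hg hg_anti hg_nonneg hg_int ha hb)
  set v := limUnder atTop fun s => ellFlow ω (-s) (a s, b s)
  have hcont : Continuous fun w => ellNormSq ω (w - v) := by unfold ellNormSq; fun_prop
  refine ⟨v, ?_⟩
  have h := (hcont.tendsto v).comp hlim
  rw [sub_self, ellNormSq, Prod.fst_zero, Prod.snd_zero] at h
  simpa only [ellNormSq_sub_ellFlow hω.ne', Function.comp_def, zero_pow two_ne_zero, mul_zero,
    add_zero] using h

end Potential

lemma inv_cosh_sq_le (x : ℝ) : (cosh x ^ 2)⁻¹ ≤ 2 * exp (-x) := by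
  have h1 := one_le_cosh x
  have h2 : exp x / 2 ≤ cosh x := by rw [cosh_eq]; linarith [exp_pos (-x)]
  calc (cosh x ^ 2)⁻¹ ≤ (cosh x)⁻¹ := inv_anti₀ (by positivity) (by nlinarith)
    _ ≤ (exp x / 2)⁻¹ := inv_anti₀ (by positivity) h2
    _ = 2 * exp (-x) := by rw [inv_div, exp_neg, div_eq_mul_inv]

section InvCoshSq

variable {k : ℝ}

lemma antitoneOn_inv_cosh_sq (hk : 0 ≤ k) :
    AntitoneOn (fun t => (cosh (k * t) ^ 2)⁻¹) (Ici 0) := fun s hs t ht hst => by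
  have : cosh (k * s) ≤ cosh (k * t) := by
    rw [cosh_le_cosh, abs_of_nonneg (mul_nonneg hk hs), abs_of_nonneg (mul_nonneg hk ht)]
    exact mul_le_mul_of_nonneg_left hst hk
  dsimp only
  gcongr

lemma integrableOn_inv_cosh_sq_Ioi (hk : 0 < k) :
    IntegrableOn (fun t => (cosh (k * t) ^ 2)⁻¹) (Ioi 0) := by
  refine ((exp_neg_integrableOn_Ioi 0 hk).const_mul 2).mono' (by fun_prop)
    ((ae_restrict_iff' measurableSet_Ioi).2 (ae_of_all _ fun t _ => ?_))
  rw [norm_of_nonneg (by positivity), neg_mul]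
  exact inv_cosh_sq_le _

end InvCoshSq

lemma alph_pow_two_mul {m : ℝ} (hm : 0 < m) {p : ℕ} (hp : 1 ≤ p) (t : ℝ) :
    alph m p t ^ (2 * p) = m ^ 2 * (p + 1) * (cosh (p * m * t) ^ 2)⁻¹ := by
  have hp0 : (p : ℝ) ≠ 0 := Nat.cast_ne_zero.2 (by omega)
  have hc : 0 < cosh (p * m * t) := cosh_pos _
  have hp1 : (0 : ℝ) < p + 1 := by positivity
  have h1 : (1 : ℝ) / p * ((2 * p : ℕ) : ℝ) = ((2 : ℕ) : ℝ) := by push_cast; field_simp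
  have h2 : (1 : ℝ) / (2 * p) * ((2 * p : ℕ) : ℝ) = ((1 : ℕ) : ℝ) := by push_cast; field_simp
  unfold alph
  rw [div_pow, mul_pow, ← rpow_natCast (m ^ ((1 : ℝ) / p)),
    ← rpow_natCast (((p : ℝ) + 1) ^ ((1 : ℝ) / (2 * p))),
    ← rpow_natCast (cosh (p * m * t) ^ ((1 : ℝ) / p)),
    ← rpow_mul hm.le, ← rpow_mul hp1.le, ← rpow_mul hc.le,
    h1, h2, rpow_natCast, rpow_natCast, rpow_natCast, pow_one, div_eq_mul_inv]

theorem stmt_10 (m : ℝ) (hm : 0 < m) (p : ℕ) (hp : 1 ≤ p) (lam : ℝ) (hlam : m < lam)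
    (a b : ℝ → ℝ)
    (ha : ∀ t, HasDerivAt a (b t) t)
    (hb : ∀ t, HasDerivAt b
      (-(lam ^ 2 - m ^ 2) * a t - (2 * p + 1) * (alph m p t) ^ (2 * p) * a t) t) :
    ∃ ap bp : ℝ,
      Tendsto (fun t : ℝ =>
          Real.sqrt ((lam ^ 2 - m ^ 2) *
              (a t - (ellFlow (Real.sqrt (lam ^ 2 - m ^ 2)) t (ap, bp)).1) ^ 2 +
            (b t - (ellFlow (Real.sqrt (lam ^ 2 - m ^ 2)) t (ap, bp)).2) ^ 2))
        atTop (nhds 0) := by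
  have hlm : 0 < lam ^ 2 - m ^ 2 := by nlinarith
  have hω2 : √(lam ^ 2 - m ^ 2) ^ 2 = lam ^ 2 - m ^ 2 := sq_sqrt hlm.le
  have hpm : 0 < (p : ℝ) * m := mul_pos (by exact_mod_cast hp) hm
  set C : ℝ := (2 * p + 1) * (m ^ 2 * (p + 1))
  have hC : 0 ≤ C := by positivity
  obtain ⟨v, hv⟩ := exists_tendsto_ellNormSq_sub_ellFlow (sqrt_pos.2 hlm)
    (g := fun t => C * (cosh (p * m * t) ^ 2)⁻¹)
    (by fun_prop (disch := exact fun t => by positivity))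
    (fun s hs t ht hst => mul_le_mul_of_nonneg_left (antitoneOn_inv_cosh_sq hpm.le hs ht hst) hC)
    (fun t _ => by positivity)
    ((integrableOn_inv_cosh_sq_Ioi hpm).const_mul C)
    ha (fun t => (hb t).congr_deriv (by rw [hω2, alph_pow_two_mul hm hp]; ring))
  refine ⟨v.1, v.2, ?_⟩
  simpa [ellNormSq, hω2] using hv.sqrt
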